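/- For every real t > 0 and every integer x ≥ 0, one has √t · e^{−t} · I_x(t) ≤ (t/(t + x))^{x/2} = (1 + x/t)^{−x/2}. -/

import Mathlib

open Real

/-- The modified `I`-Bessel function of integer order `x`, via its integral
representation `I_x(t) = (1/π) ∫_0^π e^{t cos θ} cos(xθ) dθ`. -/
noncomputable def besselI (x : ℤ) (t : ℝ) : ℝ :=
  (1 / Real.pi) * ∫ θ in (0:ℝ)..Real.pi, Real.exp (t * Real.cos θ) * Real.cos ((x : ℝ) * θ)

/-!
`2π Iₙ(t) = ∫₀^{2π} e^{t cos θ} cos(nθ) dθ` is the real part of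
`-i ∮ e^{(t/2)(z + z⁻¹)} z^{-n-1} dz` over the unit circle. Moving the contour to the circle of
radius `r ≥ 1` gives the Cauchy estimate `Iₙ(t) ≤ r⁻ⁿ I₀(s)` with `s = (t/2)(r + r⁻¹)`, and
`cos θ ≤ 1 - 2θ²/π²` bounds `I₀(s) ≤ eˢ √(π/(2s)) / 2` by a Gaussian integral. For
`r = (t + x)/t` and `q = r⁻¹` one has `s - t = (x/2)(1 - q)`, so the claim reduces to
`q e^{1-q} ≤ 1`, that is `q ≤ e^{q-1}`.
-/

open MeasureTheory intervalIntegral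

theorem integral_zero_two_pi_eq_two_mul_of_symm {f : ℝ → ℝ}
    (hf : IntervalIntegrable f volume 0 (2 * π)) (hsymm : ∀ θ, f (2 * π - θ) = f θ) :
    ∫ θ in 0..2 * π, f θ = 2 * ∫ θ in 0..π, f θ := by
  have hπ : π ∈ Set.uIcc 0 (2 * π) := Set.mem_uIcc_of_le pi_pos.le (by linarith [pi_pos])
  have hright : ∫ θ in π..2 * π, f θ = ∫ θ in 0..π, f θ := by
    have h := integral_comp_sub_left f (2 * π) (a := 0) (b := π)
    simp only [hsymm, sub_zero, show 2 * π - π = π by ring] at h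
    exact h.symm
  rw [← integral_add_adjacent_intervals (hf.mono_set (Set.uIcc_subset_uIcc Set.left_mem_uIcc hπ))
    (hf.mono_set (Set.uIcc_subset_uIcc hπ Set.right_mem_uIcc)), hright, two_mul]

theorem besselI_eq_integral_zero_two_pi (n : ℤ) (t : ℝ) :
    besselI n t = (2 * π)⁻¹ * ∫ θ in 0..2 * π, exp (t * cos θ) * cos (n * θ) := by
  rw [integral_zero_two_pi_eq_two_mul_of_symm (Continuous.intervalIntegrable (by fun_prop) _ _)
    fun θ => ?_, besselI]
  · field_simp
  · rw [cos_two_pi_sub, mul_sub, cos_int_mul_two_pi_sub]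

theorem integral_exp_neg_mul_sq_le {b a : ℝ} (hb : 0 < b) (ha : 0 ≤ a) :
    ∫ x in 0..a, exp (-b * x ^ 2) ≤ √(π / b) / 2 := by
  rw [← integral_gaussian_Ioi, integral_of_le ha]
  exact setIntegral_mono_set (integrableOn_Ioi_exp_neg_mul_sq_iff.2 hb)
    (.of_forall fun _ => (exp_pos _).le) Set.Ioc_subset_Ioi_self.eventuallyLE

theorem besselI_zero_le {s : ℝ} (hs : 0 < s) : besselI 0 s ≤ exp s * (√(π / (2 * s)) / 2) := by
  have hπ := pi_pos
  have hcos : ∀ θ ∈ Set.Icc 0 π,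
      exp (s * cos θ) * cos ((0 : ℤ) * θ) ≤ exp s * exp (-(2 * s / π ^ 2) * θ ^ 2) := by
    intro θ hθ
    rw [Int.cast_zero, zero_mul, cos_zero, mul_one, ← exp_add, exp_le_exp]
    have := cos_le_one_sub_mul_cos_sq (abs_le.2 ⟨by linarith [hθ.1], hθ.2⟩)
    have h := mul_le_mul_of_nonneg_left this hs.le
    linarith [show s * (1 - 2 / π ^ 2 * θ ^ 2) = s + -(2 * s / π ^ 2) * θ ^ 2 by ring]
  have hsqrt : √(π / (2 * s / π ^ 2)) = π * √(π / (2 * s)) := by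
    rw [div_div_eq_mul_div, mul_comm, mul_div_assoc, sqrt_mul (sq_nonneg π), sqrt_sq hπ.le]
  calc besselI 0 s ≤ π⁻¹ * ∫ θ in 0..π, exp s * exp (-(2 * s / π ^ 2) * θ ^ 2) := by
        rw [besselI, one_div]
        gcongr
        exact integral_mono_on hπ.le (Continuous.intervalIntegrable (by fun_prop) _ _)
          (Continuous.intervalIntegrable (by fun_prop) _ _) hcos
    _ ≤ π⁻¹ * (exp s * (√(π / (2 * s / π ^ 2)) / 2)) := by
        rw [intervalIntegral.integral_const_mul]
        gcongr
        exact integral_exp_neg_mul_sq_le (by positivity) hπ.le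
    _ = exp s * (√(π / (2 * s)) / 2) := by
        rw [hsqrt]; field_simp

/-- `exp ((t / 2) (z + z⁻¹)) = ∑ₙ Iₙ(t) zⁿ`, so `Iₙ(t)` is the residue of this function at `0`. -/
noncomputable def besselIntegrand (t : ℝ) (n : ℤ) (z : ℂ) : ℂ :=
  Complex.exp (t / 2 * (z + z⁻¹)) * z ^ (-n - 1)

section besselIntegrand

variable (t : ℝ) (n : ℤ)

theorem differentiableAt_besselIntegrand {z : ℂ} (hz : z ≠ 0) :
    DifferentiableAt ℂ (besselIntegrand t n) z := by
  unfold besselIntegrand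
  fun_prop (disch := simp [hz])

theorem circleIntegral_besselIntegrand_eq_of_le {r R : ℝ} (hr : 0 < r) (hrR : r ≤ R) :
    ∮ z in C(0, R), besselIntegrand t n z = ∮ z in C(0, r), besselIntegrand t n z := by
  have hne : ∀ z ∈ (Metric.closedBall (0 : ℂ) R \ Metric.ball 0 r), z ≠ 0 := by
    rintro z ⟨-, hz⟩ rfl
    exact hz (Metric.mem_ball_self hr)
  refine Complex.circleIntegral_eq_of_differentiable_on_annulus_off_countable hr hrR
    Set.countable_empty (fun z hz => ?_) fun z hz => ?_
  · exact (differentiableAt_besselIntegrand t n (hne z hz)).continuousAt.continuousWithinAt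
  · exact differentiableAt_besselIntegrand t n
      (hne z ⟨Metric.ball_subset_closedBall hz.1.1,
        fun h => hz.1.2 (Metric.ball_subset_closedBall h)⟩)

theorem neg_I_mul_deriv_circleMap_smul_besselIntegrand {r : ℝ} (hr : r ≠ 0) (θ : ℝ) :
    -Complex.I * (deriv (circleMap 0 r) θ • besselIntegrand t n (circleMap 0 r θ)) =
      Complex.exp (t / 2 * (circleMap 0 r θ + (circleMap 0 r θ)⁻¹)) * circleMap 0 r θ ^ (-n) := by
  have hw : circleMap 0 r θ ≠ 0 := circleMap_ne_center hr
  rw [deriv_circleMap, smul_eq_mul, besselIntegrand, zpow_sub_one₀ hw]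
  field_simp
  rw [Complex.I_sq]
  ring

theorem re_exp_mul_zpow_circleMap_one (θ : ℝ) :
    (Complex.exp (t / 2 * (circleMap 0 1 θ + (circleMap 0 1 θ)⁻¹)) * circleMap 0 1 θ ^ (-n)).re =
      exp (t * cos θ) * cos (n * θ) := by
  have hsum : (t : ℂ) / 2 * (circleMap 0 1 θ + (circleMap 0 1 θ)⁻¹) = (t * cos θ : ℝ) := by
    rw [circleMap_zero, Complex.ofReal_one, one_mul, ← Complex.exp_neg, ← neg_mul,
      ← Complex.two_cos]
    push_cast
    ring
  have hpow : circleMap 0 1 θ ^ (-n) = Complex.exp ((-(n * θ) : ℝ) * Complex.I) := by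
    rw [circleMap_zero, Complex.ofReal_one, one_mul, ← Complex.exp_int_mul]
    push_cast
    ring_nf
  rw [hsum, hpow, ← Complex.ofReal_exp, Complex.re_ofReal_mul, Complex.exp_ofReal_mul_I_re,
    cos_neg]

theorem norm_exp_mul_zpow_circleMap {r : ℝ} (hr : 0 < r) (θ : ℝ) :
    ‖Complex.exp (t / 2 * (circleMap 0 r θ + (circleMap 0 r θ)⁻¹)) * circleMap 0 r θ ^ (-n)‖ =
      r ^ (-n) * exp (t / 2 * (r + r⁻¹) * cos θ) := by
  have hre : ((t : ℂ) / 2 * (circleMap 0 r θ + (circleMap 0 r θ)⁻¹)).re =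
      t / 2 * (r + r⁻¹) * cos θ := by
    rw [show (t : ℂ) / 2 = ((t / 2 : ℝ) : ℂ) by push_cast; ring, Complex.re_ofReal_mul,
      Complex.add_re, Complex.inv_re, Complex.normSq_eq_norm_sq, norm_circleMap_zero,
      circleMap_zero_re, abs_of_pos hr]
    field_simp
  rw [norm_mul, Complex.norm_exp, hre, norm_zpow, norm_circleMap_zero, abs_of_pos hr, mul_comm]

theorem integral_exp_mul_cos_mul_cos_le {r : ℝ} (hr : 1 ≤ r) :
    ∫ θ in 0..2 * π, exp (t * cos θ) * cos (n * θ) ≤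
      r ^ (-n) * ∫ θ in 0..2 * π, exp (t / 2 * (r + r⁻¹) * cos θ) := by
  have hr0 : 0 < r := one_pos.trans_le hr
  have hcont : Continuous fun θ => Complex.exp (t / 2 * (circleMap 0 1 θ + (circleMap 0 1 θ)⁻¹)) *
      circleMap 0 1 θ ^ (-n) := by
    have hw := fun θ => circleMap_ne_center (c := 0) (θ := θ) one_ne_zero
    fun_prop (disch := simp [hw])
  calc ∫ θ in 0..2 * π, exp (t * cos θ) * cos (n * θ)
      = (-Complex.I * ∮ z in C(0, 1), besselIntegrand t n z).re := by
        simp_rw [circleIntegral, ← intervalIntegral.integral_const_mul,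
          neg_I_mul_deriv_circleMap_smul_besselIntegrand t n one_ne_zero, ← RCLike.re_to_complex,
          ← intervalIntegral_re (hcont.intervalIntegrable 0 (2 * π)), RCLike.re_to_complex,
          re_exp_mul_zpow_circleMap_one]
    _ = (-Complex.I * ∮ z in C(0, r), besselIntegrand t n z).re := by
        rw [circleIntegral_besselIntegrand_eq_of_le t n one_pos hr]
    _ ≤ ‖∮ z in C(0, r), besselIntegrand t n z‖ := by
        simpa using Complex.re_le_norm (-Complex.I * ∮ z in C(0, r), besselIntegrand t n z)
    _ ≤ ∫ θ in 0..2 * π, ‖deriv (circleMap 0 r) θ • besselIntegrand t n (circleMap 0 r θ)‖ :=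
        norm_integral_le_integral_norm (by positivity)
    _ = r ^ (-n) * ∫ θ in 0..2 * π, exp (t / 2 * (r + r⁻¹) * cos θ) := by
        rw [← intervalIntegral.integral_const_mul]
        refine integral_congr fun θ _ => ?_
        rw [← norm_exp_mul_zpow_circleMap t n hr0, ←
          neg_I_mul_deriv_circleMap_smul_besselIntegrand t n hr0.ne', norm_mul, norm_neg,
          Complex.norm_I, one_mul]

theorem besselI_le_zpow_mul_besselI_zero {r : ℝ} (hr : 1 ≤ r) :
    besselI n t ≤ r ^ (-n) * besselI 0 (t / 2 * (r + r⁻¹)) := by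
  simp only [besselI_eq_integral_zero_two_pi, Int.cast_zero, zero_mul, cos_zero, mul_one]
  calc (2 * π)⁻¹ * ∫ θ in 0..2 * π, exp (t * cos θ) * cos (n * θ)
      ≤ (2 * π)⁻¹ * (r ^ (-n) * ∫ θ in 0..2 * π, exp (t / 2 * (r + r⁻¹) * cos θ)) := by
        gcongr
        exact integral_exp_mul_cos_mul_cos_le t n hr
    _ = _ := by ring

end besselIntegrand

theorem rpow_mul_exp_le_rpow_half {q x : ℝ} (hq : 0 < q) (hx : 0 ≤ x) :
    q ^ x * exp (x / 2 * (1 - q)) ≤ q ^ (x / 2) := by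
  have hqexp : q * exp (1 - q) ≤ 1 := by
    calc q * exp (1 - q) ≤ exp (q - 1) * exp (1 - q) := by
          gcongr; linarith [add_one_le_exp (q - 1)]
      _ = 1 := by rw [← exp_add, sub_add_sub_cancel', sub_self, exp_zero]
  calc q ^ x * exp (x / 2 * (1 - q)) = q ^ (x / 2) * (q * exp (1 - q)) ^ (x / 2) := by
        rw [mul_rpow hq.le (exp_pos _).le, ← exp_mul, mul_comm (1 - q), ← mul_assoc,
          ← rpow_add hq, add_halves]
    _ ≤ q ^ (x / 2) * 1 := by
        gcongr
        exact rpow_le_one (by positivity) hqexp (by positivity)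
    _ = q ^ (x / 2) := mul_one _

theorem sqrt_mul_sqrt_pi_div_two_mul_le_two {t s : ℝ} (ht : 0 < t) (hts : t ≤ s) :
    √t * √(π / (2 * s)) ≤ 2 := by
  have harg : t * (π / (2 * s)) ≤ 2 ^ 2 := by
    rw [mul_div_assoc', div_le_iff₀ (by linarith)]
    nlinarith [pi_le_four]
  rw [← sqrt_mul ht.le]
  exact (sqrt_le_sqrt harg).trans_eq (sqrt_sq zero_le_two)

theorem div_add_rpow_eq_one_add_div_rpow_neg {t x : ℝ} (ht : 0 < t) (hx : 0 ≤ x) (y : ℝ) :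
    (t / (t + x)) ^ y = (1 + x / t) ^ (-y) := by
  have h1 : t / (t + x) = (1 + x / t)⁻¹ := by
    rw [← inv_div, add_div, div_self ht.ne']
  rw [h1, inv_rpow (by positivity), ← rpow_neg (by positivity)]

/-- For `t > 0` and integer `x ≥ 0`:
`√t · e^{-t} · I_x(t) ≤ (t/(t+x))^{x/2} = (1 + x/t)^{-x/2}`. -/
theorem sqrt_mul_exp_mul_besselI_le (t : ℝ) (ht : 0 < t) (x : ℕ) :
    Real.sqrt t * Real.exp (-t) * besselI (x : ℤ) t ≤ (t / (t + x)) ^ ((x : ℝ) / 2) ∧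
    (t / (t + x)) ^ ((x : ℝ) / 2) = (1 + (x : ℝ) / t) ^ (-(x : ℝ) / 2) := by
  refine ⟨?_, ?_⟩
  · set r := (t + x) / t
    have hr : 1 ≤ r := (one_le_div ht).2 (by simp)
    have hrinv : r⁻¹ = t / (t + x) := inv_div _ _
    set s := t / 2 * (r + r⁻¹)
    have hs : -t + s = x / 2 * (1 - r⁻¹) := by
      simp only [s, r, inv_div]
      field_simp
      ring
    have hts : t ≤ s := by
      have : 0 ≤ x / 2 * (1 - r⁻¹) :=
        mul_nonneg (by positivity) (sub_nonneg.2 (inv_le_one_of_one_le₀ hr))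
      linarith
    calc √t * exp (-t) * besselI x t
        ≤ √t * exp (-t) * (r ^ (-(x : ℤ)) * (exp s * (√(π / (2 * s)) / 2))) := by
          gcongr
          refine (besselI_le_zpow_mul_besselI_zero t x hr).trans ?_
          gcongr
          exact besselI_zero_le (ht.trans_le hts)
      _ = (√t * (√(π / (2 * s)) / 2)) * (r⁻¹ ^ (x : ℝ) * exp (x / 2 * (1 - r⁻¹))) := by
          rw [← hs, exp_add, zpow_neg, zpow_natCast, rpow_natCast, inv_pow]
          ring
      _ ≤ 1 * r⁻¹ ^ ((x : ℝ) / 2) := by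
          gcongr
          · linarith [sqrt_mul_sqrt_pi_div_two_mul_le_two ht hts]
          · exact rpow_mul_exp_le_rpow_half (by positivity) (by positivity)
      _ = (t / (t + x)) ^ ((x : ℝ) / 2) := by rw [one_mul, hrinv]
  · rw [div_add_rpow_eq_one_add_div_rpow_neg ht x.cast_nonneg, neg_div]
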